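/- If f, g : (V, P) → (W, S) are weakly homotopic weak morphisms of path complexes, then the induced chain maps f_*, g_* : Ω_*(P) → Ω_*(S) are chain homotopic, and hence f_* = g_* : H_n(P) → H_n(S) for all n. Consequently, if (V, P) and (W, S) are weakly homotopy equivalent path complexes, then H_n(P) ≅ H_n(S) for all n; moreover, if the weak homotopy equivalence is realized by weak morphisms f and g, then f_* and g_* are mutually inverse isomorphisms of the path homology groups. -/

import Mathlib

/-!
STATEMENT 10: If f, g : (V, P) → (W, S) are weakly homotopic weak morphisms of path
complexes, then the induced chain maps f_*, g_* : Ω_*(P) → Ω_*(S) are chain homotopic,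
and hence f_* = g_* : H_n(P) → H_n(S) for all n.  Consequently, weakly homotopy
equivalent path complexes have isomorphic path homology; moreover, if the weak homotopy
equivalence is realized by weak morphisms f and g, then f_* and g_* are mutually inverse
isomorphisms.

The cylinder P × I is modelled on V ⊕ V; "f_* = g_* on H_n" is expressed at the level of
cycles (the difference of the images of a cycle is a boundary), and "mutually inverse"
by g_*(f_* z) − z and f_*(g_* w) − w being boundaries, together with H_n(P) ≅ H_n(S).
-/

open scoped Classical

namespace PH

/-- An elementary path (a list of vertices) is regular if no two consecutive
vertices coincide. -/
def Reg {V : Type} (l : List V) : Prop := l.Chain' (· ≠ ·)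

/-- The regular boundary operator ∂ on the span of regular paths (all degrees at once,
with the convention that ∂ vanishes on 0-paths): on a basis path `p` of length ≥ 2 it is
the alternating sum of the vertex deletions, with non-regular terms replaced by 0. -/
noncomputable def dReg (K : Type) [Field K] (V : Type) :
    (List V →₀ K) →ₗ[K] (List V →₀ K) :=
  Finsupp.lsum K fun p => LinearMap.toSpanSingleton K (List V →₀ K)
    (if 2 ≤ p.length then
      ∑ q : Fin p.length, ((-1 : K) ^ (q : ℕ)) •
        (if Reg (p.eraseIdx (q : ℕ)) then Finsupp.single (p.eraseIdx (q : ℕ)) (1 : K) else 0)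
    else 0)

/-- The map induced on regular chains by a vertex map f:
`e_{i₀…iₙ} ↦ e_{f(i₀)…f(iₙ)}` if the image path is regular, and 0 otherwise. -/
noncomputable def find (K : Type) [Field K] {V W : Type} (f : V → W) :
    (List V →₀ K) →ₗ[K] (List W →₀ K) :=
  Finsupp.lsum K fun p => LinearMap.toSpanSingleton K (List W →₀ K)
    (if Reg (p.map f) then Finsupp.single (p.map f) (1 : K) else 0)

/-- `A_n(P)`: the span of the regular allowed n-paths (lists of n+1 vertices in P). -/
def Asub (K : Type) [Field K] {V : Type} (P : Set (List V)) (n : ℕ) :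
    Submodule K (List V →₀ K) :=
  Finsupp.supported K K {l | l ∈ P ∧ l.length = n + 1 ∧ Reg l}

/-- `Ω_n(P)`: the ∂-invariant allowed regular n-chains. -/
noncomputable def OmegaSub (K : Type) [Field K] {V : Type} (P : Set (List V)) (n : ℕ) :
    Submodule K (List V →₀ K) :=
  Asub K P n ⊓ Submodule.comap (dReg K V) (Asub K P (n - 1))

/-- The n-cycles of Ω_*(P). -/
noncomputable def Zsub (K : Type) [Field K] {V : Type} (P : Set (List V)) (n : ℕ) :
    Submodule K (List V →₀ K) :=
  OmegaSub K P n ⊓ LinearMap.ker (dReg K V)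

/-- The n-boundaries ∂Ω_{n+1}(P). -/
noncomputable def Bsub (K : Type) [Field K] {V : Type} (P : Set (List V)) (n : ℕ) :
    Submodule K (List V →₀ K) :=
  Submodule.map (dReg K V) (OmegaSub K P (n + 1))

/-- Path homology `H_n(P)`, realized as the image of the n-cycles in the quotient of the
ambient space by the n-boundaries (so `H_n(P) ≅ Z_n/(Z_n ∩ B_n) = Z_n/B_n`). -/
noncomputable def Hsm (K : Type) [Field K] {V : Type} (P : Set (List V)) (n : ℕ) :
    Submodule K ((List V →₀ K) ⧸ Bsub K P n) :=
  Submodule.map (Bsub K P n).mkQ (Zsub K P n)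

/-- A path complex on V: a set of non-empty elementary paths (lists) closed under
removing the last (`dropLast`) or the first (`tail`) vertex. -/
structure PathComplex (V : Type) where
  carrier : Set (List V)
  not_nil : ∀ p ∈ carrier, p ≠ []
  dropLast_mem : ∀ p ∈ carrier, 2 ≤ p.length → p.dropLast ∈ carrier
  tail_mem : ∀ p ∈ carrier, 2 ≤ p.length → p.tail ∈ carrier

end PH

namespace PH

def IsWeakMor {V W : Type} (P : Set (List V)) (S : Set (List W)) (f : V → W) : Prop :=
  ∀ p ∈ P, p.map f ∈ S ∨ ¬ Reg (p.map f)

/-- The paths of the cylinder path complex P × I on V ⊕ V: the paths of P on the bottom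
copy, the paths of P on the top copy, and the mixed paths
i₀…i_k i_k'…i_n' with i₀…i_k i_{k+1}…i_n ∈ P. -/
def cylSet {V : Type} (P : Set (List V)) : Set (List (V ⊕ V)) :=
  {l | (∃ p ∈ P, l = p.map Sum.inl) ∨ (∃ p ∈ P, l = p.map Sum.inr) ∨
       (∃ p ∈ P, ∃ k : ℕ, k < p.length ∧
          l = (p.take (k + 1)).map Sum.inl ++ (p.drop k).map Sum.inr)}

/-- Weak one-step homotopy f ∼₁ g via a weak morphism from the cylinder restricting to
f and g (in either order) on the two ends. -/
def WOneStep {V W : Type} (P : Set (List V)) (S : Set (List W)) (f g : V → W) : Prop :=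
  ∃ F : V ⊕ V → W, IsWeakMor (cylSet P) S F ∧
    (((∀ v : V, F (Sum.inl v) = f v) ∧ (∀ v : V, F (Sum.inr v) = g v)) ∨
     ((∀ v : V, F (Sum.inl v) = g v) ∧ (∀ v : V, F (Sum.inr v) = f v)))

/-- Weak homotopy f ∼ g: a finite chain of weak one-step homotopies through weak
morphisms. -/
def WHomotopic {V W : Type} (P : Set (List V)) (S : Set (List W)) (f g : V → W) : Prop :=
  Relation.ReflTransGen
    (fun a b => IsWeakMor P S a ∧ IsWeakMor P S b ∧ WOneStep P S a b) f g

end PH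

/-!
A weak morphism `F` on the cylinder yields a chain homotopy `F_* ∘ Π` between its restrictions
to the two ends, where the prism operator `Π` sends `e_{i₀…iₙ}` to
`∑ₖ (-1)ᵏ e_{i₀…i_k i_k'…i_n'}` and satisfies `∂Π + Π∂ = (inr)_* - (inl)_*`. Since `F` sends
allowed paths of the cylinder to allowed or non-regular paths, `F_* ∘ Π` maps `Ω_n(P)` into
`Ω_{n+1}(S)`. Chain homotopies add up along a chain of one-step homotopies, and on a cycle `z`
the identity reads `f_* z - g_* z = ∂ (T z)`, a boundary; this gives the statements on homology.
-/

namespace PH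

section Paths
variable {V W : Type}

theorem reg_iff_getElem {l : List V} :
    Reg l ↔ ∀ (i : ℕ) (h : i + 1 < l.length), l[i] ≠ l[i + 1] := by
  rw [Reg, List.Chain', List.isChain_iff_getElem]

theorem Reg.of_map {f : V → W} {l : List V} (h : Reg (l.map f)) : Reg l := by
  rw [Reg, List.Chain', List.isChain_map] at h
  exact h.imp fun _ _ hab he => hab (congrArg f he)

theorem not_reg_eraseIdx_of_getElem_eq {l : List V} {j q : ℕ} (hj : j + 1 < l.length)
    (he : l[j] = l[j + 1]) (hqj : q ≠ j) (hqj' : q ≠ j + 1) : ¬ Reg (l.eraseIdx q) := by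
  rw [reg_iff_getElem]
  push Not
  rcases lt_or_gt_of_ne hqj with hq | hq
  · exact ⟨j - 1, by grind, by grind⟩
  · exact ⟨j, by grind, by grind⟩

theorem eraseIdx_eq_eraseIdx_succ_of_getElem_eq {l : List V} {j : ℕ} (hj : j + 1 < l.length)
    (he : l[j] = l[j + 1]) : l.eraseIdx j = l.eraseIdx (j + 1) :=
  List.ext_getElem (by grind) fun i _ _ => by grind

end Paths

section Chains
variable (K : Type) [Field K] {V W U : Type}

noncomputable def regBasis (l : List V) : List V →₀ K :=
  if Reg l then Finsupp.single l 1 else 0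

variable {K}

theorem find_single (f : V → W) (p : List V) :
    find K f (Finsupp.single p 1) = regBasis K (p.map f) := by
  rw [find, Finsupp.lsum_single, LinearMap.toSpanSingleton_apply, one_smul, regBasis]

theorem find_regBasis (f : V → W) (p : List V) :
    find K f (regBasis K p) = regBasis K (p.map f) := by
  by_cases hp : Reg p
  · rw [regBasis, if_pos hp, find_single]
  · rw [regBasis, if_neg hp, map_zero, regBasis, if_neg (mt Reg.of_map hp)]

theorem dReg_single (p : List V) :
    dReg K V (Finsupp.single p 1) =
      if 2 ≤ p.length then
        ∑ q ∈ Finset.range p.length, (-1 : K) ^ q • regBasis K (p.eraseIdx q)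
      else 0 := by
  rw [dReg, Finsupp.lsum_single, LinearMap.toSpanSingleton_apply, one_smul]
  split_ifs
  · exact Fin.sum_univ_eq_sum_range (fun q => (-1 : K) ^ q • regBasis K (p.eraseIdx q)) _
  · rfl

/-- The two faces deleting either vertex of a repeated pair cancel, and every other face
still contains the pair. -/
theorem dReg_single_of_not_reg {m : List V} (hm : ¬ Reg m) :
    dReg K V (Finsupp.single m 1) = 0 := by
  obtain ⟨j, hj, he⟩ : ∃ j, ∃ (_ : j + 1 < m.length), m[j] = m[j + 1] := by
    simpa [reg_iff_getElem] using hm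
  have hpair : ({j, j + 1} : Finset ℕ) ⊆ Finset.range m.length := by
    intro x hx
    simp only [Finset.mem_insert, Finset.mem_singleton] at hx
    rcases hx with rfl | rfl <;> simp only [Finset.mem_range] <;> omega
  have hrest : ∀ q ∈ Finset.range m.length \ {j, j + 1},
      (-1 : K) ^ q • regBasis K (m.eraseIdx q) = 0 := by
    intro q hq
    simp only [Finset.mem_sdiff, Finset.mem_insert, Finset.mem_singleton, not_or] at hq
    rw [regBasis, if_neg (not_reg_eraseIdx_of_getElem_eq hj he hq.2.1 hq.2.2), smul_zero]
  rw [dReg_single, if_pos (by omega), ← Finset.sum_sdiff hpair, Finset.sum_eq_zero hrest,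
    zero_add, Finset.sum_pair (by omega), ← eraseIdx_eq_eraseIdx_succ_of_getElem_eq hj he,
    pow_succ, mul_neg_one, neg_smul, add_neg_cancel]

theorem dReg_regBasis (p : List V) : dReg K V (regBasis K p) = dReg K V (Finsupp.single p 1) := by
  by_cases hp : Reg p
  · rw [regBasis, if_pos hp]
  · rw [regBasis, if_neg hp, map_zero, dReg_single_of_not_reg hp]

theorem find_comp_dReg (f : V → W) : find K f ∘ₗ dReg K V = dReg K W ∘ₗ find K f := by
  refine Finsupp.lhom_ext' fun p => LinearMap.ext_ring ?_
  simp only [LinearMap.comp_apply, Finsupp.lsingle_apply]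
  rw [find_single, dReg_regBasis, dReg_single, dReg_single, List.length_map]
  split_ifs
  · simp only [map_sum, map_smul, find_regBasis, List.eraseIdx_map]
  · rw [map_zero]

theorem find_dReg (f : V → W) (v : List V →₀ K) :
    find K f (dReg K V v) = dReg K W (find K f v) :=
  LinearMap.congr_fun (find_comp_dReg f) v

theorem find_comp_find (f : V → W) (g : W → U) : find K g ∘ₗ find K f = find K (g ∘ f) := by
  refine Finsupp.lhom_ext' fun p => LinearMap.ext_ring ?_
  simp only [LinearMap.comp_apply, Finsupp.lsingle_apply]
  rw [find_single, find_regBasis, find_single, List.map_map]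

theorem find_find (f : V → W) (g : W → U) (v : List V →₀ K) :
    find K g (find K f v) = find K (g ∘ f) v :=
  LinearMap.congr_fun (find_comp_find f g) v

end Chains

/-- Reindexing of the off-diagonal faces of the prism: deleting the `q`-th vertex of the
`k`-th prism path gives the `(k-1)`-th prism path of the `q`-th face if `q < k`, and the `k`-th
prism path of the `(q-1)`-th face if `q > k + 1`. -/
theorem sum_offDiag_eq_sum {M : Type} [AddCommMonoid M] (L : ℕ) (t u : ℕ → ℕ → M)
    (hlt : ∀ k q, q < k → k < L → t k q = u q (k - 1))
    (hgt : ∀ k q, k + 1 < q → q ≤ L → t k q = u (q - 1) k) :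
    ∑ k ∈ Finset.range L, ∑ q ∈ ((Finset.range (L + 1)).erase k).erase (k + 1), t k q =
      ∑ q ∈ Finset.range L, ∑ j ∈ Finset.range (L - 1), u q j := by
  rw [Finset.sum_sigma', Finset.sum_sigma']
  refine Finset.sum_nbij'
    (fun x => if x.2 < x.1 then ⟨x.2, x.1 - 1⟩ else ⟨x.2 - 1, x.1⟩)
    (fun y => if y.1 ≤ y.2 then ⟨y.2 + 1, y.1⟩ else ⟨y.2, y.1 + 1⟩) ?_ ?_ ?_ ?_ ?_ <;>
  · rintro ⟨a, b⟩ hab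
    simp only [Finset.mem_sigma, Finset.mem_erase, Finset.mem_range] at hab ⊢
    split_ifs <;> grind

section Prism
variable {V : Type}

/-- The path `i₀…i_k i_k'…i_n'` of the cylinder. -/
def cylPath (p : List V) (k : ℕ) : List (V ⊕ V) :=
  (p.take (k + 1)).map Sum.inl ++ (p.drop k).map Sum.inr

/-- The path `i₀…i_{k-1} i_k'…i_n'`. -/
def jumpPath (p : List V) (k : ℕ) : List (V ⊕ V) :=
  (p.take k).map Sum.inl ++ (p.drop k).map Sum.inr

theorem length_cylPath {p : List V} {k : ℕ} (hk : k < p.length) :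
    (cylPath p k).length = p.length + 1 := by
  simp only [cylPath, List.length_append, List.length_map, List.length_take, List.length_drop]
  omega

theorem cylPath_mem_cylSet {P : Set (List V)} {p : List V} (hp : p ∈ P) {k : ℕ}
    (hk : k < p.length) : cylPath p k ∈ cylSet P :=
  Or.inr (Or.inr ⟨p, hp, k, hk, rfl⟩)

theorem Reg.of_cylPath {p : List V} {k : ℕ} (h : Reg (cylPath p k)) : Reg p := by
  rw [reg_iff_getElem] at h ⊢
  intro i hi he
  by_cases hik : i + 1 ≤ k
  · exact h i (by grind [cylPath]) (by grind [cylPath])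
  · exact h (i + 1) (by grind [cylPath]) (by grind [cylPath])

theorem jumpPath_zero (p : List V) : jumpPath p 0 = p.map Sum.inr := by simp [jumpPath]

theorem jumpPath_length (p : List V) : jumpPath p p.length = p.map Sum.inl := by simp [jumpPath]

theorem cylPath_eraseIdx_of_lt {p : List V} {k q : ℕ} (hq : q < k) (hk : k < p.length) :
    (cylPath p k).eraseIdx q = cylPath (p.eraseIdx q) (k - 1) :=
  List.ext_getElem (by grind [cylPath]) fun i _ _ => by grind [cylPath]

theorem cylPath_eraseIdx_self {p : List V} {k : ℕ} (hk : k < p.length) :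
    (cylPath p k).eraseIdx k = jumpPath p k :=
  List.ext_getElem (by grind [cylPath, jumpPath]) fun i _ _ => by grind [cylPath, jumpPath]

theorem cylPath_eraseIdx_succ {p : List V} {k : ℕ} (hk : k < p.length) :
    (cylPath p k).eraseIdx (k + 1) = jumpPath p (k + 1) :=
  List.ext_getElem (by grind [cylPath, jumpPath]) fun i _ _ => by grind [cylPath, jumpPath]

theorem cylPath_eraseIdx_of_gt {p : List V} {k q : ℕ} (hq : k + 1 < q) (hqp : q ≤ p.length) :
    (cylPath p k).eraseIdx q = cylPath (p.eraseIdx (q - 1)) k :=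
  List.ext_getElem (by grind [cylPath]) fun i _ _ => by grind [cylPath]

variable (K : Type) [Field K]

noncomputable def prism : (List V →₀ K) →ₗ[K] (List (V ⊕ V) →₀ K) :=
  Finsupp.lsum K fun p => LinearMap.toSpanSingleton K (List (V ⊕ V) →₀ K)
    (∑ k ∈ Finset.range p.length, (-1 : K) ^ k • regBasis K (cylPath p k))

variable {K}

theorem prism_single (p : List V) :
    prism K (Finsupp.single p 1) =
      ∑ k ∈ Finset.range p.length, (-1 : K) ^ k • regBasis K (cylPath p k) := by
  rw [prism, Finsupp.lsum_single, LinearMap.toSpanSingleton_apply, one_smul]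

theorem prism_regBasis (p : List V) :
    prism K (regBasis K p) = prism K (Finsupp.single p 1) := by
  by_cases hp : Reg p
  · rw [regBasis, if_pos hp]
  · rw [regBasis, if_neg hp, map_zero, prism_single, eq_comm]
    refine Finset.sum_eq_zero fun k _ => ?_
    rw [regBasis, if_neg (mt Reg.of_cylPath hp), smul_zero]

/-- Deleting vertex `k` or `k + 1` of `cylPath p k` gives the jump paths, which telescope to
the two ends; the other faces are, by `sum_offDiag_eq_sum`, the prism paths of the faces of
`p`. -/
theorem dReg_prism_single (p : List V) :
    dReg K (V ⊕ V) (prism K (Finsupp.single p 1)) =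
      find K Sum.inr (Finsupp.single p 1) - find K Sum.inl (Finsupp.single p 1)
        - prism K (dReg K V (Finsupp.single p 1)) := by
  obtain rfl | hp := eq_or_ne p []
  · simp [prism_single, dReg_single, find_single, regBasis, Reg]
  have hL : 1 ≤ p.length := List.length_pos_iff.mpr hp
  set t : ℕ → ℕ → List (V ⊕ V) →₀ K := fun k q =>
    (-1 : K) ^ (k + q) • regBasis K ((cylPath p k).eraseIdx q)
  set u : ℕ → ℕ → List (V ⊕ V) →₀ K := fun q j =>
    (-1 : K) ^ (q + j + 1) • regBasis K (cylPath (p.eraseIdx q) j)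
  set G : ℕ → List (V ⊕ V) →₀ K := fun j => regBasis K (jumpPath p j)
  have hfaces : ∀ k ∈ Finset.range p.length,
      dReg K (V ⊕ V) ((-1 : K) ^ k • regBasis K (cylPath p k)) =
        ∑ q ∈ Finset.range (p.length + 1), t k q := by
    intro k hk
    rw [Finset.mem_range] at hk
    rw [map_smul, dReg_regBasis, dReg_single, if_pos (by rw [length_cylPath hk]; omega),
      length_cylPath hk, Finset.smul_sum]
    simp only [t, smul_smul, ← pow_add]
  have hdiag : ∀ k ∈ Finset.range p.length,
      ∑ q ∈ Finset.range (p.length + 1), t k q =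
        (G k - G (k + 1)) +
          ∑ q ∈ ((Finset.range (p.length + 1)).erase k).erase (k + 1), t k q := by
    intro k hk
    rw [Finset.mem_range] at hk
    have hk0 : k ∈ Finset.range (p.length + 1) := Finset.mem_range.mpr (by omega)
    have hk1 : k + 1 ∈ (Finset.range (p.length + 1)).erase k := by
      simp only [Finset.mem_erase, Finset.mem_range]; omega
    rw [← Finset.add_sum_erase _ _ hk0, ← Finset.add_sum_erase _ _ hk1, ← add_assoc]
    congr 1
    have hodd : (-1 : K) ^ (k + (k + 1)) = -1 := Odd.neg_one_pow ⟨k, by ring⟩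
    simp only [t, G, cylPath_eraseIdx_self hk, cylPath_eraseIdx_succ hk,
      Even.neg_one_pow ⟨k, rfl⟩, hodd, one_smul, neg_one_smul, sub_eq_add_neg]
  have hprism : prism K (dReg K V (Finsupp.single p 1)) =
      -∑ q ∈ Finset.range p.length, ∑ j ∈ Finset.range (p.length - 1), u q j := by
    rw [dReg_single]
    split_ifs with h2
    · rw [map_sum, ← Finset.sum_neg_distrib]
      refine Finset.sum_congr rfl fun q hq => ?_
      rw [Finset.mem_range] at hq
      rw [map_smul, prism_regBasis, prism_single, List.length_eraseIdx_of_lt hq,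
        Finset.smul_sum, ← Finset.sum_neg_distrib]
      simp only [u, smul_smul, ← pow_add, pow_succ, mul_neg_one, neg_smul, neg_neg]
    · simp [show p.length - 1 = 0 by omega]
  rw [prism_single, map_sum, Finset.sum_congr rfl hfaces, Finset.sum_congr rfl hdiag,
    Finset.sum_add_distrib, Finset.sum_range_sub' G,
    sum_offDiag_eq_sum p.length t u (fun k q hq hk => ?_) (fun k q hq hqp => ?_), hprism,
    find_single, find_single, ← jumpPath_zero, ← jumpPath_length, sub_neg_eq_add]
  · simp only [t, u, cylPath_eraseIdx_of_lt hq hk, show q + (k - 1) + 1 = k + q by omega]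
  · simp only [t, u, cylPath_eraseIdx_of_gt hq hqp, show q - 1 + k + 1 = k + q by omega]

theorem dReg_comp_prism :
    dReg K (V ⊕ V) ∘ₗ prism K =
      find K Sum.inr - find K Sum.inl - prism K ∘ₗ dReg K V :=
  Finsupp.lhom_ext' fun p => LinearMap.ext_ring (dReg_prism_single p)

theorem dReg_prism (v : List V →₀ K) :
    dReg K (V ⊕ V) (prism K v) = find K Sum.inr v - find K Sum.inl v - prism K (dReg K V v) :=
  LinearMap.congr_fun dReg_comp_prism v

end Prism

section Complexes
variable {K : Type} [Field K] {V W U : Type} {P : Set (List V)} {S : Set (List W)} {n : ℕ}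

theorem map_supported_le {α M : Type} [AddCommGroup M] [Module K M] {A : Set α}
    {N : Submodule K M} (L : (α →₀ K) →ₗ[K] M)
    (hL : ∀ p ∈ A, L (Finsupp.single p 1) ∈ N) : (Finsupp.supported K K A).map L ≤ N := by
  rw [Finsupp.supported_eq_span_single, Submodule.map_span_le]
  rintro _ ⟨p, hp, rfl⟩
  exact hL p hp

theorem IsWeakMor.find_mem_Asub {f : V → W} (hf : IsWeakMor P S f) {v : List V →₀ K}
    (hv : v ∈ Asub K P n) : find K f v ∈ Asub K S n := by
  refine map_supported_le (find K f) (fun p hp => ?_) (Submodule.mem_map_of_mem hv)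
  obtain ⟨hp, hlen, -⟩ := hp
  rw [find_single, regBasis]
  split_ifs with hreg
  · refine Finsupp.single_mem_supported K 1 ⟨(hf p hp).resolve_right (not_not.mpr hreg), ?_, hreg⟩
    rw [List.length_map, hlen]
  · exact zero_mem _

theorem dReg_eq_zero_of_mem_Asub_zero {v : List V →₀ K} (hv : v ∈ Asub K P 0) :
    dReg K V v = 0 := by
  refine (Submodule.mem_bot K).mp
    (map_supported_le (dReg K V) (fun p hp => ?_) (Submodule.mem_map_of_mem hv))
  rw [dReg_single, if_neg (by rw [hp.2.1]; omega)]
  exact zero_mem _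

theorem find_id_of_mem_Asub {v : List V →₀ K} (hv : v ∈ Asub K P n) : find K id v = v := by
  rw [Asub, Finsupp.supported_eq_span_single] at hv
  refine LinearMap.eqOn_span (f := find K id) (g := LinearMap.id) ?_ hv
  rintro _ ⟨p, ⟨_, _, hreg⟩, rfl⟩
  rw [find_single, List.map_id, regBasis, if_pos hreg, LinearMap.id_apply]

theorem prism_mem_Asub {v : List V →₀ K} (hv : v ∈ Asub K P n) :
    prism K v ∈ Asub K (cylSet P) (n + 1) := by
  refine map_supported_le (prism K) (fun p hp => ?_) (Submodule.mem_map_of_mem hv)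
  obtain ⟨hp, hlen, -⟩ := hp
  rw [prism_single]
  refine Submodule.sum_mem _ fun k hk => Submodule.smul_mem _ _ ?_
  rw [Finset.mem_range] at hk
  rw [regBasis]
  split_ifs with hreg
  · exact Finsupp.single_mem_supported K 1
      ⟨cylPath_mem_cylSet hp hk, by rw [length_cylPath hk, hlen], hreg⟩
  · exact zero_mem _

theorem IsWeakMor.find_mem_OmegaSub {f : V → W} (hf : IsWeakMor P S f) {v : List V →₀ K}
    (hv : v ∈ OmegaSub K P n) : find K f v ∈ OmegaSub K S n :=
  ⟨hf.find_mem_Asub hv.1, by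
    rw [SetLike.mem_coe, Submodule.mem_comap, ← find_dReg]; exact hf.find_mem_Asub hv.2⟩

theorem IsWeakMor.find_mem_Zsub {f : V → W} (hf : IsWeakMor P S f) {z : List V →₀ K}
    (hz : z ∈ Zsub K P n) : find K f z ∈ Zsub K S n :=
  ⟨hf.find_mem_OmegaSub hz.1, by
    rw [SetLike.mem_coe, LinearMap.mem_ker, ← find_dReg, LinearMap.mem_ker.mp hz.2, map_zero]⟩

theorem IsWeakMor.find_mem_Bsub {f : V → W} (hf : IsWeakMor P S f) {b : List V →₀ K}
    (hb : b ∈ Bsub K P n) : find K f b ∈ Bsub K S n := by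
  obtain ⟨w, hw, rfl⟩ := hb
  exact ⟨find K f w, hf.find_mem_OmegaSub hw, (find_dReg f w).symm⟩

theorem IsWeakMor.comp_of_map_mem {R : Set (List U)} {F : V → W} {g : U → V}
    (hF : IsWeakMor P S F) (hg : ∀ p ∈ R, p.map g ∈ P) : IsWeakMor R S (F ∘ g) := by
  intro p hp
  rw [← List.map_map]
  exact hF _ (hg p hp)

end Complexes

section Homotopy
variable {K : Type} [Field K] {V W : Type} {P : Set (List V)} {S : Set (List W)} {n : ℕ}

variable (K P S) in
def IsChainHomotopy (f g : V → W) (T : (List V →₀ K) →ₗ[K] (List W →₀ K)) : Prop :=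
  (∀ n, ∀ v ∈ OmegaSub K P n, T v ∈ OmegaSub K S (n + 1)) ∧
    ∀ v, find K f v - find K g v = dReg K W (T v) + T (dReg K V v)

theorem isChainHomotopy_zero (f : V → W) : IsChainHomotopy K P S f f 0 :=
  ⟨fun _ _ _ => zero_mem _, fun v => by simp⟩

theorem IsChainHomotopy.neg {f g : V → W} {T : (List V →₀ K) →ₗ[K] (List W →₀ K)}
    (hT : IsChainHomotopy K P S f g T) : IsChainHomotopy K P S g f (-T) :=
  ⟨fun n v hv => neg_mem (hT.1 n v hv), fun v => by
    rw [LinearMap.neg_apply, LinearMap.neg_apply, map_neg, ← neg_add, ← hT.2 v, neg_sub]⟩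

theorem IsChainHomotopy.add {f g h : V → W} {T T' : (List V →₀ K) →ₗ[K] (List W →₀ K)}
    (hT : IsChainHomotopy K P S f g T) (hT' : IsChainHomotopy K P S g h T') :
    IsChainHomotopy K P S f h (T + T') :=
  ⟨fun n v hv => add_mem (hT.1 n v hv) (hT'.1 n v hv), fun v => by
    rw [← sub_add_sub_cancel _ (find K g v), hT.2 v, hT'.2 v]
    simp only [LinearMap.add_apply, map_add]
    abel⟩

theorem isChainHomotopy_cylinder {F : V ⊕ V → W} (hF : IsWeakMor (cylSet P) S F) :
    IsChainHomotopy K P S (F ∘ Sum.inr) (F ∘ Sum.inl) (find K F ∘ₗ prism K) := by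
  have hid : ∀ v : List V →₀ K, find K (F ∘ Sum.inr) v - find K (F ∘ Sum.inl) v =
      dReg K W (find K F (prism K v)) + find K F (prism K (dReg K V v)) := by
    intro v
    rw [← find_dReg, dReg_prism, map_sub, map_sub, find_find, find_find]
    abel
  have hinl : IsWeakMor P S (F ∘ Sum.inl) :=
    hF.comp_of_map_mem fun p hp => Or.inl ⟨p, hp, rfl⟩
  have hinr : IsWeakMor P S (F ∘ Sum.inr) :=
    hF.comp_of_map_mem fun p hp => Or.inr (Or.inl ⟨p, hp, rfl⟩)
  refine ⟨fun n v hv => ⟨hF.find_mem_Asub (prism_mem_Asub hv.1), ?_⟩, hid⟩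
  have hprism_dReg : find K F (prism K (dReg K V v)) ∈ Asub K S n := by
    cases n with
    | zero => rw [dReg_eq_zero_of_mem_Asub_zero hv.1, map_zero, map_zero]; exact zero_mem _
    | succ m => exact hF.find_mem_Asub (prism_mem_Asub hv.2)
  rw [SetLike.mem_coe, Submodule.mem_comap, LinearMap.comp_apply, Nat.add_sub_cancel,
    eq_sub_of_add_eq (hid v).symm]
  exact sub_mem (sub_mem (hinr.find_mem_Asub hv.1) (hinl.find_mem_Asub hv.1)) hprism_dReg

theorem WOneStep.exists_isChainHomotopy {f g : V → W} (h : WOneStep P S f g) :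
    ∃ T, IsChainHomotopy K P S f g T := by
  obtain ⟨F, hF, ⟨hl, hr⟩ | ⟨hl, hr⟩⟩ := h
  · obtain rfl : F ∘ Sum.inl = f := funext hl
    obtain rfl : F ∘ Sum.inr = g := funext hr
    exact ⟨_, (isChainHomotopy_cylinder hF).neg⟩
  · obtain rfl : F ∘ Sum.inl = g := funext hl
    obtain rfl : F ∘ Sum.inr = f := funext hr
    exact ⟨_, isChainHomotopy_cylinder hF⟩

theorem WHomotopic.exists_isChainHomotopy {f g : V → W} (h : WHomotopic P S f g) :
    ∃ T, IsChainHomotopy K P S f g T := by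
  induction h with
  | refl => exact ⟨0, isChainHomotopy_zero f⟩
  | tail _ hstep ih =>
    obtain ⟨T, hT⟩ := ih
    obtain ⟨T', hT'⟩ := hstep.2.2.exists_isChainHomotopy (K := K)
    exact ⟨T + T', hT.add hT'⟩

theorem IsChainHomotopy.sub_mem_Bsub {f g : V → W} {T : (List V →₀ K) →ₗ[K] (List W →₀ K)}
    (hT : IsChainHomotopy K P S f g T) {z : List V →₀ K} (hz : z ∈ Zsub K P n) :
    find K f z - find K g z ∈ Bsub K S n := by
  rw [hT.2 z, LinearMap.mem_ker.mp hz.2, map_zero, add_zero]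
  exact Submodule.mem_map_of_mem (hT.1 n z hz.1)

theorem WHomotopic.find_find_sub_mem_Bsub {f : V → W} {g : W → V}
    (h : WHomotopic P P (g ∘ f) id) {z : List V →₀ K} (hz : z ∈ Zsub K P n) :
    find K g (find K f z) - z ∈ Bsub K P n := by
  obtain ⟨T, hT⟩ := h.exists_isChainHomotopy (K := K)
  simpa only [find_find, find_id_of_mem_Asub hz.1.1] using hT.sub_mem_Bsub hz

end Homotopy

section Homology
variable (K : Type) [Field K] {V W : Type} {P : Set (List V)} {S : Set (List W)}

noncomputable def homologyMap {f : V → W} (hf : IsWeakMor P S f) (n : ℕ) :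
    Hsm K P n →ₗ[K] Hsm K S n :=
  LinearMap.restrict
    ((Bsub K P n).liftQ ((Bsub K S n).mkQ ∘ₗ find K f) fun _ hb =>
      (Submodule.Quotient.mk_eq_zero _).mpr (hf.find_mem_Bsub hb))
    (p := Hsm K P n) (q := Hsm K S n) fun _ ⟨z, hz, hx⟩ =>
      ⟨find K f z, hf.find_mem_Zsub hz, by rw [← hx]; rfl⟩

variable {K}

theorem homologyMap_mk {f : V → W} (hf : IsWeakMor P S f) (n : ℕ) {x : Hsm K P n}
    {z : List V →₀ K} (hz : (x : (List V →₀ K) ⧸ Bsub K P n) = Submodule.Quotient.mk z) :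
    (homologyMap K hf n x : (List W →₀ K) ⧸ Bsub K S n) = Submodule.Quotient.mk (find K f z) := by
  obtain ⟨x, hx⟩ := x
  dsimp only at hz
  subst hz
  rfl

theorem homologyMap_comp_eq_id {f : V → W} {g : W → V} (hf : IsWeakMor P S f)
    (hg : IsWeakMor S P g) (n : ℕ)
    (hgf : ∀ z ∈ Zsub K P n, find K g (find K f z) - z ∈ Bsub K P n) :
    homologyMap K hg n ∘ₗ homologyMap K hf n = LinearMap.id := by
  ext ⟨_, z, hz, rfl⟩
  rw [LinearMap.comp_apply, LinearMap.id_apply, homologyMap_mk hg n (homologyMap_mk hf n rfl)]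
  exact (Submodule.Quotient.eq _).mpr (hgf z hz)

end Homology

end PH

theorem statement10_general (K : Type) [Field K] (V W : Type)
    (P : PH.PathComplex V) (S : PH.PathComplex W) :
    -- weakly homotopic weak morphisms induce chain homotopic chain maps,
    -- hence the same map on path homology
    (∀ f g : V → W, PH.IsWeakMor P.carrier S.carrier f →
      PH.IsWeakMor P.carrier S.carrier g → PH.WHomotopic P.carrier S.carrier f g →
      ((∃ T : ℕ → ((List V →₀ K) →ₗ[K] (List W →₀ K)),
          (∀ (n : ℕ) (v : List V →₀ K), v ∈ PH.OmegaSub K P.carrier n →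
              T n v ∈ PH.OmegaSub K S.carrier (n + 1)) ∧
          (∀ (n : ℕ) (v : List V →₀ K), v ∈ PH.OmegaSub K P.carrier n →
              PH.find K f v - PH.find K g v =
                PH.dReg K W (T n v) + T (n - 1) (PH.dReg K V v))) ∧
        (∀ (n : ℕ) (z : List V →₀ K), z ∈ PH.Zsub K P.carrier n →
            PH.find K f z ∈ PH.Zsub K S.carrier n ∧
            PH.find K g z ∈ PH.Zsub K S.carrier n ∧
            PH.find K f z - PH.find K g z ∈ PH.Bsub K S.carrier n))) ∧
    -- a weak homotopy equivalence realized by f, g gives mutually inverse isomorphisms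
    (∀ (f : V → W) (g : W → V), PH.IsWeakMor P.carrier S.carrier f →
      PH.IsWeakMor S.carrier P.carrier g →
      PH.WHomotopic P.carrier P.carrier (g ∘ f) id →
      PH.WHomotopic S.carrier S.carrier (f ∘ g) id →
      (∀ n : ℕ, Nonempty ((PH.Hsm K P.carrier n) ≃ₗ[K] (PH.Hsm K S.carrier n))) ∧
      (∀ (n : ℕ) (z : List V →₀ K), z ∈ PH.Zsub K P.carrier n →
          PH.find K g (PH.find K f z) - z ∈ PH.Bsub K P.carrier n) ∧
      (∀ (n : ℕ) (z : List W →₀ K), z ∈ PH.Zsub K S.carrier n →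
          PH.find K f (PH.find K g z) - z ∈ PH.Bsub K S.carrier n)) := by
  refine ⟨fun f g hf hg hfg => ?_, fun f g hf hg hgf hfg => ?_⟩
  · obtain ⟨T, hT⟩ := hfg.exists_isChainHomotopy (K := K)
    exact ⟨⟨fun _ => T, hT.1, fun _ v _ => hT.2 v⟩,
      fun n z hz => ⟨hf.find_mem_Zsub hz, hg.find_mem_Zsub hz, hT.sub_mem_Bsub hz⟩⟩
  · have hP : ∀ n, ∀ z ∈ PH.Zsub K P.carrier n, PH.find K g (PH.find K f z) - z ∈
        PH.Bsub K P.carrier n := fun _ _ hz => hgf.find_find_sub_mem_Bsub hz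
    have hS : ∀ n, ∀ z ∈ PH.Zsub K S.carrier n, PH.find K f (PH.find K g z) - z ∈
        PH.Bsub K S.carrier n := fun _ _ hz => hfg.find_find_sub_mem_Bsub hz
    exact ⟨fun n => ⟨LinearEquiv.ofLinearMap (PH.homologyMap K hf n) (PH.homologyMap K hg n)
      (PH.homologyMap_comp_eq_id hg hf n (hS n)) (PH.homologyMap_comp_eq_id hf hg n (hP n))⟩,
      hP, hS⟩

theorem statement10 (K : Type) [Field K] (V W : Type) [Fintype V] [Fintype W]
    (P : PH.PathComplex V) (S : PH.PathComplex W)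
    (h0 : ∀ v : V, [v] ∈ P.carrier) (h0' : ∀ w : W, [w] ∈ S.carrier) :
    -- weakly homotopic weak morphisms induce chain homotopic chain maps,
    -- hence the same map on path homology
    (∀ f g : V → W, PH.IsWeakMor P.carrier S.carrier f →
      PH.IsWeakMor P.carrier S.carrier g → PH.WHomotopic P.carrier S.carrier f g →
      ((∃ T : ℕ → ((List V →₀ K) →ₗ[K] (List W →₀ K)),
          (∀ (n : ℕ) (v : List V →₀ K), v ∈ PH.OmegaSub K P.carrier n →
              T n v ∈ PH.OmegaSub K S.carrier (n + 1)) ∧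
          (∀ (n : ℕ) (v : List V →₀ K), v ∈ PH.OmegaSub K P.carrier n →
              PH.find K f v - PH.find K g v =
                PH.dReg K W (T n v) + T (n - 1) (PH.dReg K V v))) ∧
        (∀ (n : ℕ) (z : List V →₀ K), z ∈ PH.Zsub K P.carrier n →
            PH.find K f z ∈ PH.Zsub K S.carrier n ∧
            PH.find K g z ∈ PH.Zsub K S.carrier n ∧
            PH.find K f z - PH.find K g z ∈ PH.Bsub K S.carrier n))) ∧
    -- a weak homotopy equivalence realized by f, g gives mutually inverse isomorphisms
    (∀ (f : V → W) (g : W → V), PH.IsWeakMor P.carrier S.carrier f →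
      PH.IsWeakMor S.carrier P.carrier g →
      PH.WHomotopic P.carrier P.carrier (g ∘ f) id →
      PH.WHomotopic S.carrier S.carrier (f ∘ g) id →
      (∀ n : ℕ, Nonempty ((PH.Hsm K P.carrier n) ≃ₗ[K] (PH.Hsm K S.carrier n))) ∧
      (∀ (n : ℕ) (z : List V →₀ K), z ∈ PH.Zsub K P.carrier n →
          PH.find K g (PH.find K f z) - z ∈ PH.Bsub K P.carrier n) ∧
      (∀ (n : ℕ) (z : List W →₀ K), z ∈ PH.Zsub K S.carrier n →
          PH.find K f (PH.find K g z) - z ∈ PH.Bsub K S.carrier n)) :=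
  statement10_general K V W P S
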